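/- Let (λ_n)_{n≥1} and (μ_n)_{n≥1} be strictly increasing real sequences tending to +∞ such that the series ∑_n e^{−λ_n t} and ∑_n e^{−μ_n t} converge for every t > 0. Let (α_n) and (β_n) be square-summable sequences of nonzero real numbers, and let (v_n) and (w_n) be sequences of unit vectors in ℝ². If ∑_{n=1}^∞ α_n e^{−λ_n t} v_n = ∑_{n=1}^∞ β_n e^{−μ_n t} w_n for all t > 0, then λ_n = μ_n and α_n v_n = β_n w_n for every n ∈ ℕ. -/

import Mathlib

open Set

noncomputable section

set_option maxHeartbeats 1000000

open Filter

noncomputable section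

private lemma summable_mul_exp (lam c : ℕ → ℝ) {C t : ℝ}
    (hc : ∀ n, |c n| ≤ C) (hs : Summable fun n => Real.exp (-(lam n) * t)) :
    Summable fun n => c n * Real.exp (-(lam n) * t) := by
  apply Summable.of_norm_bounded (hs.mul_left C)
  intro n
  rw [norm_mul, Real.norm_eq_abs, Real.norm_eq_abs, Real.abs_exp]
  exact mul_le_mul_of_nonneg_right (hc n) (Real.exp_pos _).le

private lemma decay (lam : ℕ → ℝ) (hmono : ∀ n, lam 0 ≤ lam n)
    (hsum : ∀ t : ℝ, 0 < t → Summable fun n => Real.exp (-(lam n) * t))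
    (c : ℕ → ℝ) (C : ℝ) (hc : ∀ n, |c n| ≤ C) (a : ℝ) (ha : a < lam 0) :
    Tendsto (fun t => Real.exp (a * t) * ∑' n, c n * Real.exp (-(lam n) * t))
      atTop (nhds 0) := by
  have hC0 : 0 ≤ C := le_trans (abs_nonneg _) (hc 0)
  have hS : Summable fun n => Real.exp (-(lam n) * 1) := hsum 1 one_pos
  set S : ℝ := ∑' n, Real.exp (-(lam n) * 1) with hSdef
  apply squeeze_zero_norm' (a := fun t => (C * S) * Real.exp ((a - lam 0) * t + lam 0))
  · filter_upwards [eventually_ge_atTop (1 : ℝ)] with t ht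
    have ht0 : (0 : ℝ) < t := lt_of_lt_of_le one_pos ht
    have hse := hsum t ht0
    have h1 : ‖∑' n, c n * Real.exp (-(lam n) * t)‖ ≤ C * ∑' n, Real.exp (-(lam n) * t) := by
      apply tsum_of_norm_bounded ((hse.hasSum).mul_left C)
      intro n
      rw [norm_mul, Real.norm_eq_abs, Real.norm_eq_abs, Real.abs_exp]
      exact mul_le_mul_of_nonneg_right (hc n) (Real.exp_pos _).le
    have h2 : (∑' n, Real.exp (-(lam n) * t)) ≤ Real.exp (-(lam 0) * (t - 1)) * S := by
      rw [hSdef, ← tsum_mul_left]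
      apply Summable.tsum_le_tsum _ hse (hS.mul_left _)
      intro n
      have he : Real.exp (-(lam n) * t)
          = Real.exp (-(lam n) * (t - 1)) * Real.exp (-(lam n) * 1) := by
        rw [← Real.exp_add]; ring_nf
      rw [he]
      refine mul_le_mul_of_nonneg_right (Real.exp_le_exp.2 ?_) (Real.exp_pos _).le
      have := hmono n
      nlinarith
    have hexp : Real.exp (a * t) * Real.exp (-(lam 0) * (t - 1))
        = Real.exp ((a - lam 0) * t + lam 0) := by
      rw [← Real.exp_add]; ring_nf
    calc ‖Real.exp (a * t) * ∑' n, c n * Real.exp (-(lam n) * t)‖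
        = Real.exp (a * t) * ‖∑' n, c n * Real.exp (-(lam n) * t)‖ := by
          rw [norm_mul, Real.norm_eq_abs, Real.abs_exp]
      _ ≤ Real.exp (a * t) * (C * (Real.exp (-(lam 0) * (t - 1)) * S)) := by
          refine mul_le_mul_of_nonneg_left (le_trans h1 ?_) (Real.exp_pos _).le
          refine mul_le_mul_of_nonneg_left h2 hC0 |>.trans_eq (by ring)
      _ = (C * S) * (Real.exp (a * t) * Real.exp (-(lam 0) * (t - 1))) := by ring
      _ = (C * S) * Real.exp ((a - lam 0) * t + lam 0) := by rw [hexp]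
  · have hlin : Tendsto (fun t : ℝ => (a - lam 0) * t + lam 0) atTop atBot :=
      tendsto_atBot_add_const_right _ _
        (Filter.Tendsto.const_mul_atTop_of_neg (by linarith) tendsto_id)
    have := (Real.tendsto_exp_atBot.comp hlin).const_mul (C * S)
    simpa using this

private lemma head (lam : ℕ → ℝ) (hlam : StrictMono lam)
    (hsum : ∀ t : ℝ, 0 < t → Summable fun n => Real.exp (-(lam n) * t))
    (c : ℕ → ℝ) (C : ℝ) (hc : ∀ n, |c n| ≤ C) :
    Tendsto (fun t => Real.exp (lam 0 * t) * ∑' n, c n * Real.exp (-(lam n) * t))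
      atTop (nhds (c 0)) := by
  have hd := decay (fun n => lam (n + 1)) (fun n => hlam.monotone (by omega))
      (fun t ht => (summable_nat_add_iff 1).2 (hsum t ht))
      (fun n => c (n + 1)) C (fun n => hc _) (lam 0) (hlam (by omega : 0 < 1))
  have h0 : Tendsto (fun t => c 0 + Real.exp (lam 0 * t)
      * ∑' n, c (n + 1) * Real.exp (-(lam (n + 1)) * t)) atTop (nhds (c 0 + 0)) :=
    tendsto_const_nhds.add hd
  rw [add_zero] at h0
  apply h0.congr'
  filter_upwards [eventually_gt_atTop (0 : ℝ)] with t ht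
  have hsc : Summable fun n => c n * Real.exp (-(lam n) * t) :=
    summable_mul_exp lam c hc (hsum t ht)
  rw [Summable.tsum_eq_zero_add hsc]
  have hone : Real.exp (lam 0 * t) * Real.exp (-(lam 0) * t) = 1 := by
    rw [← Real.exp_add, show lam 0 * t + -(lam 0) * t = 0 by ring, Real.exp_zero]
  linear_combination (-(c 0)) * hone

private lemma bound_of_sq_summable (α : ℕ → ℝ) (hα : Summable fun n => (α n) ^ 2) :
    ∃ C : ℝ, ∀ n, |α n| ≤ C := by
  obtain ⟨C, hC⟩ := (hα.tendsto_atTop_zero).bddAbove_range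
  refine ⟨Real.sqrt C, fun n => ?_⟩
  rw [← Real.sqrt_sq_eq_abs]
  exact Real.sqrt_le_sqrt (hC ⟨n, rfl⟩)

private lemma unit_bound (v : ℕ → Fin 2 → ℝ)
    (hv : ∀ n, Real.sqrt ((v n 0) ^ 2 + (v n 1) ^ 2) = 1) :
    ∀ n i, |v n i| ≤ 1 := by
  intro n i
  have h1 : (v n 0) ^ 2 + (v n 1) ^ 2 = 1 := Real.sqrt_eq_one.1 (hv n)
  rw [← Real.sqrt_sq_eq_abs, show (1 : ℝ) = Real.sqrt 1 by simp]
  apply Real.sqrt_le_sqrt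
  fin_cases i
  · show (v n 0) ^ 2 ≤ 1
    nlinarith [sq_nonneg (v n 0), sq_nonneg (v n 1)]
  · show (v n 1) ^ 2 ≤ 1
    nlinarith [sq_nonneg (v n 0), sq_nonneg (v n 1)]

private lemma summable_pi (lam α : ℕ → ℝ) (v : ℕ → Fin 2 → ℝ) {C t : ℝ}
    (hb : ∀ n i, |α n * v n i| ≤ C)
    (hs : Summable fun n => Real.exp (-(lam n) * t)) :
    Summable fun n => (α n * Real.exp (-(lam n) * t)) • v n := by
  rw [Pi.summable]
  intro i
  apply (summable_mul_exp lam (fun n => α n * v n i) (fun n => hb n i) hs).congr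
  intro n
  simp [smul_eq_mul]
  ring

/-- Base case: identification of the leading terms. -/
private lemma key0 (lam mu α β : ℕ → ℝ) (v w : ℕ → Fin 2 → ℝ)
    (hlam : StrictMono lam) (hmu : StrictMono mu)
    (hsumlam : ∀ t : ℝ, 0 < t → Summable fun n => Real.exp (-(lam n) * t))
    (hsummu : ∀ t : ℝ, 0 < t → Summable fun n => Real.exp (-(mu n) * t))
    (hα : Summable fun n => (α n)^2) (hβ : Summable fun n => (β n)^2)
    (hα0 : ∀ n, α n ≠ 0) (hβ0 : ∀ n, β n ≠ 0)
    (hv : ∀ n, Real.sqrt ((v n 0)^2 + (v n 1)^2) = 1)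
    (hw : ∀ n, Real.sqrt ((w n 0)^2 + (w n 1)^2) = 1)
    (heq : ∀ t : ℝ, 0 < t →
      (∑' n, (α n * Real.exp (-(lam n) * t)) • v n)
        = ∑' n, (β n * Real.exp (-(mu n) * t)) • w n) :
    lam 0 = mu 0 ∧ α 0 • v 0 = β 0 • w 0 := by
  obtain ⟨Cα, hCα⟩ := bound_of_sq_summable α hα
  obtain ⟨Cβ, hCβ⟩ := bound_of_sq_summable β hβ
  have hvle := unit_bound v hv
  have hwle := unit_bound w hw
  have hbv : ∀ n i, |α n * v n i| ≤ Cα := by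
    intro n i
    rw [abs_mul]
    calc |α n| * |v n i| ≤ Cα * 1 :=
          mul_le_mul (hCα n) (hvle n i) (abs_nonneg _) ((abs_nonneg _).trans (hCα n))
      _ = Cα := mul_one _
  have hbw : ∀ n i, |β n * w n i| ≤ Cβ := by
    intro n i
    rw [abs_mul]
    calc |β n| * |w n i| ≤ Cβ * 1 :=
          mul_le_mul (hCβ n) (hwle n i) (abs_nonneg _) ((abs_nonneg _).trans (hCβ n))
      _ = Cβ := mul_one _
  -- coordinatewise equality of the scalar series
  have happly : ∀ (t : ℝ), 0 < t → ∀ i,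
      (∑' n, (α n * v n i) * Real.exp (-(lam n) * t))
        = ∑' n, (β n * w n i) * Real.exp (-(mu n) * t) := by
    intro t ht i
    have hsL := summable_pi lam α v hbv (hsumlam t ht)
    have hsR := summable_pi mu β w hbw (hsummu t ht)
    have h1 := congrFun (heq t ht) i
    rw [tsum_apply hsL, tsum_apply hsR] at h1
    calc (∑' n, (α n * v n i) * Real.exp (-(lam n) * t))
        = ∑' n, ((α n * Real.exp (-(lam n) * t)) • v n) i :=
          tsum_congr fun n => by simp [smul_eq_mul]; ring
      _ = ∑' n, ((β n * Real.exp (-(mu n) * t)) • w n) i := h1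
      _ = ∑' n, (β n * w n i) * Real.exp (-(mu n) * t) :=
          tsum_congr fun n => by simp [smul_eq_mul]; ring
  have hv1 : (v 0 0) ^ 2 + (v 0 1) ^ 2 = 1 := Real.sqrt_eq_one.1 (hv 0)
  have hw1 : (w 0 0) ^ 2 + (w 0 1) ^ 2 = 1 := Real.sqrt_eq_one.1 (hw 0)
  -- limits
  have headL : ∀ i, Tendsto (fun t => Real.exp (lam 0 * t)
      * ∑' n, (α n * v n i) * Real.exp (-(lam n) * t)) atTop (nhds (α 0 * v 0 i)) :=
    fun i => head lam hlam hsumlam (fun n => α n * v n i) Cα (fun n => hbv n i)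
  have headR : ∀ i, Tendsto (fun t => Real.exp (mu 0 * t)
      * ∑' n, (β n * w n i) * Real.exp (-(mu n) * t)) atTop (nhds (β 0 * w 0 i)) :=
    fun i => head mu hmu hsummu (fun n => β n * w n i) Cβ (fun n => hbw n i)
  rcases lt_trichotomy (lam 0) (mu 0) with hLM | hLM | hLM
  · exfalso
    have hzero : ∀ i, α 0 * v 0 i = 0 := by
      intro i
      have l2 : Tendsto (fun t => Real.exp (lam 0 * t)
          * ∑' n, (β n * w n i) * Real.exp (-(mu n) * t)) atTop (nhds 0) :=
        decay mu (fun n => hmu.monotone (Nat.zero_le n)) hsummu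
          (fun n => β n * w n i) Cβ (fun n => hbw n i) (lam 0) hLM
      refine tendsto_nhds_unique (headL i) (l2.congr' ?_)
      filter_upwards [eventually_gt_atTop (0 : ℝ)] with t ht
      rw [happly t ht i]
    have h0 : v 0 0 = 0 := by
      rcases mul_eq_zero.1 (hzero 0) with h | h
      · exact absurd h (hα0 0)
      · exact h
    have h1 : v 0 1 = 0 := by
      rcases mul_eq_zero.1 (hzero 1) with h | h
      · exact absurd h (hα0 0)
      · exact h
    rw [h0, h1] at hv1; norm_num at hv1
  · constructor
    · exact hLM
    · funext i
      have l2 : Tendsto (fun t => Real.exp (lam 0 * t)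
          * ∑' n, (β n * w n i) * Real.exp (-(mu n) * t)) atTop (nhds (β 0 * w 0 i)) := by
        rw [hLM]; exact headR i
      have := tendsto_nhds_unique (headL i) (l2.congr' (by
        filter_upwards [eventually_gt_atTop (0 : ℝ)] with t ht
        rw [happly t ht i]))
      simpa [smul_eq_mul] using this
  · exfalso
    have hzero : ∀ i, β 0 * w 0 i = 0 := by
      intro i
      have l2 : Tendsto (fun t => Real.exp (mu 0 * t)
          * ∑' n, (α n * v n i) * Real.exp (-(lam n) * t)) atTop (nhds 0) :=
        decay lam (fun n => hlam.monotone (Nat.zero_le n)) hsumlam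
          (fun n => α n * v n i) Cα (fun n => hbv n i) (mu 0) hLM
      refine tendsto_nhds_unique (headR i) (l2.congr' ?_)
      filter_upwards [eventually_gt_atTop (0 : ℝ)] with t ht
      rw [happly t ht i]
    have h0 : w 0 0 = 0 := by
      rcases mul_eq_zero.1 (hzero 0) with h | h
      · exact absurd h (hβ0 0)
      · exact h
    have h1 : w 0 1 = 0 := by
      rcases mul_eq_zero.1 (hzero 1) with h | h
      · exact absurd h (hβ0 0)
      · exact h
    rw [h0, h1] at hw1; norm_num at hw1

private lemma aux (n : ℕ) : ∀ (lam mu α β : ℕ → ℝ) (v w : ℕ → Fin 2 → ℝ),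
    StrictMono lam → StrictMono mu →
    (∀ t : ℝ, 0 < t → Summable fun k => Real.exp (-(lam k) * t)) →
    (∀ t : ℝ, 0 < t → Summable fun k => Real.exp (-(mu k) * t)) →
    Summable (fun k => (α k)^2) → Summable (fun k => (β k)^2) →
    (∀ k, α k ≠ 0) → (∀ k, β k ≠ 0) →
    (∀ k, Real.sqrt ((v k 0)^2 + (v k 1)^2) = 1) →
    (∀ k, Real.sqrt ((w k 0)^2 + (w k 1)^2) = 1) →
    (∀ t : ℝ, 0 < t →
      (∑' k, (α k * Real.exp (-(lam k) * t)) • v k)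
        = ∑' k, (β k * Real.exp (-(mu k) * t)) • w k) →
    lam n = mu n ∧ α n • v n = β n • w n := by
  induction n with
  | zero =>
    intro lam mu α β v w hlam hmu hsl hsm hα hβ hα0 hβ0 hv hw heq
    exact key0 lam mu α β v w hlam hmu hsl hsm hα hβ hα0 hβ0 hv hw heq
  | succ m ih =>
    intro lam mu α β v w hlam hmu hsl hsm hα hβ hα0 hβ0 hv hw heq
    obtain ⟨h0, hvw0⟩ := key0 lam mu α β v w hlam hmu hsl hsm hα hβ hα0 hβ0 hv hw heq
    obtain ⟨Cα, hCα⟩ := bound_of_sq_summable α hα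
    obtain ⟨Cβ, hCβ⟩ := bound_of_sq_summable β hβ
    have hvle := unit_bound v hv
    have hwle := unit_bound w hw
    have hbv : ∀ k i, |α k * v k i| ≤ Cα := by
      intro k i
      rw [abs_mul]
      calc |α k| * |v k i| ≤ Cα * 1 :=
            mul_le_mul (hCα k) (hvle k i) (abs_nonneg _) ((abs_nonneg _).trans (hCα k))
        _ = Cα := mul_one _
    have hbw : ∀ k i, |β k * w k i| ≤ Cβ := by
      intro k i
      rw [abs_mul]
      calc |β k| * |w k i| ≤ Cβ * 1 :=
            mul_le_mul (hCβ k) (hwle k i) (abs_nonneg _) ((abs_nonneg _).trans (hCβ k))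
        _ = Cβ := mul_one _
    have htail : ∀ t : ℝ, 0 < t →
        (∑' k, (α (k+1) * Real.exp (-(lam (k+1)) * t)) • v (k+1))
          = ∑' k, (β (k+1) * Real.exp (-(mu (k+1)) * t)) • w (k+1) := by
      intro t ht
      have hsL := summable_pi lam α v hbv (hsl t ht)
      have hsR := summable_pi mu β w hbw (hsm t ht)
      have h := heq t ht
      rw [Summable.tsum_eq_zero_add hsL, Summable.tsum_eq_zero_add hsR] at h
      have hhead : (α 0 * Real.exp (-(lam 0) * t)) • v 0
          = (β 0 * Real.exp (-(mu 0) * t)) • w 0 := by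
        rw [h0, mul_comm (α 0) _, mul_smul, mul_comm (β 0) _, mul_smul, hvw0]
      rw [hhead] at h
      exact add_left_cancel h
    have hlam' : StrictMono (fun k => lam (k+1)) := fun a b hab => hlam (Nat.succ_lt_succ hab)
    have hmu' : StrictMono (fun k => mu (k+1)) := fun a b hab => hmu (Nat.succ_lt_succ hab)
    have hsl' : ∀ t : ℝ, 0 < t → Summable fun k => Real.exp (-(lam (k+1)) * t) :=
      fun t ht => (summable_nat_add_iff 1).2 (hsl t ht)
    have hsm' : ∀ t : ℝ, 0 < t → Summable fun k => Real.exp (-(mu (k+1)) * t) :=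
      fun t ht => (summable_nat_add_iff 1).2 (hsm t ht)
    have hα' : Summable fun k => (α (k+1))^2 := (summable_nat_add_iff 1).2 hα
    have hβ' : Summable fun k => (β (k+1))^2 := (summable_nat_add_iff 1).2 hβ
    exact ih (fun k => lam (k+1)) (fun k => mu (k+1)) (fun k => α (k+1)) (fun k => β (k+1))
      (fun k => v (k+1)) (fun k => w (k+1))
      hlam' hmu' hsl' hsm' hα' hβ'
      (fun k => hα0 _) (fun k => hβ0 _) (fun k => hv _) (fun k => hw _) htail


/-- **Lemma (term-by-term identification of vector Dirichlet series).**
Let `(λ_n)`, `(μ_n)` be strictly increasing sequences tending to `+∞` whose associated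
exponential series converge for every `t > 0`, let `(α_n)`, `(β_n)` be square-summable
sequences of nonzero reals, and let `(v_n)`, `(w_n)` be unit vectors in `ℝ²`. If
`∑ α_n e^{−λ_n t} v_n = ∑ β_n e^{−μ_n t} w_n` for all `t > 0`, then `λ_n = μ_n` and
`α_n v_n = β_n w_n` for every `n`. -/
theorem dirichlet_series_identification
    (lam mu : ℕ → ℝ) (α β : ℕ → ℝ) (v w : ℕ → Fin 2 → ℝ)
    (hlam : StrictMono lam) (hmu : StrictMono mu)
    (hlamtop : Filter.Tendsto lam Filter.atTop Filter.atTop)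
    (hmutop : Filter.Tendsto mu Filter.atTop Filter.atTop)
    (hsumlam : ∀ t : ℝ, 0 < t → Summable fun n => Real.exp (-(lam n) * t))
    (hsummu : ∀ t : ℝ, 0 < t → Summable fun n => Real.exp (-(mu n) * t))
    (hα : Summable fun n => (α n)^2) (hβ : Summable fun n => (β n)^2)
    (hα0 : ∀ n, α n ≠ 0) (hβ0 : ∀ n, β n ≠ 0)
    (hv : ∀ n, Real.sqrt ((v n 0)^2 + (v n 1)^2) = 1)
    (hw : ∀ n, Real.sqrt ((w n 0)^2 + (w n 1)^2) = 1)
    (heq : ∀ t : ℝ, 0 < t →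
      (∑' n, (α n * Real.exp (-(lam n) * t)) • v n)
        = ∑' n, (β n * Real.exp (-(mu n) * t)) • w n) :
    ∀ n, lam n = mu n ∧ α n • v n = β n • w n := by
  intro n
  exact aux n lam mu α β v w hlam hmu hsumlam hsummu hα hβ hα0 hβ0 hv hw heq
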